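/- arXiv:math/0411389 — 2 statements merged into one kernel-verified Lean document; each statement's English description precedes it below -/
import Mathlib

section
/- Let D(g) be the Drinfel'd double Lie algebra of a finite-dimensional real Lie bialgebra with structure constants (f, c) satisfying the compatibility condition, and let ι : D(g) → U(D(g)) be the canonical embedding into its universal enveloping algebra. Define Ω = Σ_i (ι(x^i) ⊗ ι(X_i) + ι(X_i) ⊗ ι(x^i)) in U(D(g)) ⊗ U(D(g)). Then for every element Y of D(g), the commutator [ι(Y) ⊗ 1 + 1 ⊗ ι(Y), Ω] vanishes in the algebra U(D(g)) ⊗ U(D(g)); i.e., Ω is ad-invariant. -/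
/-!
`Ω` is the image under `ι ⊗ ι` of the tensor `Σ_i (x^i ⊗ X_i + X_i ⊗ x^i) ∈ D ⊗ D` of the
canonical pairing between `g` and `g*`, and conjugating by the primitive element
`ι(Y) ⊗ 1 + 1 ⊗ ι(Y)` corresponds, under `ι ⊗ ι`, to the adjoint action of `Y` on `D ⊗ D`.
So it suffices that this tensor is `ad`-invariant in `D ⊗ D`. By linearity in `Y` one checks
this on basis elements: for `Y = x^a` the `f`-terms cancel after reindexing and the `c`-terms
cancel because `c^a_{ik}` is antisymmetric in `i, k`; the case `Y = X_a` is the same computation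
with the roles of `g` and `g*` exchanged.
-/

open scoped TensorProduct
open TensorProduct

theorem Finset.sum_sum_smul_add_swap_eq_zero {R ι M : Type*} [CommRing R] [Fintype ι]
    [AddCommGroup M] [Module R M] {g : ι → ι → R} (hg : ∀ i k, g k i = -g i k)
    (p : ι → ι → M) : ∑ i, ∑ k, g i k • (p i k + p k i) = 0 := by
  have hswap : ∑ i, ∑ k, g i k • p k i = -∑ i, ∑ k, g i k • p i k := by
    rw [Finset.sum_comm, ← Finset.sum_neg_distrib]
    exact Finset.sum_congr rfl fun i _ => by
      rw [← Finset.sum_neg_distrib]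
      exact Finset.sum_congr rfl fun k _ => by rw [hg, neg_smul]
  simp only [smul_add, Finset.sum_add_distrib, hswap, add_neg_cancel]

section

variable {R L ι : Type*} [CommRing R] [LieRing L] [LieAlgebra R L] [Fintype ι]

theorem structConst_antisymm {v : ι → L} (hv : LinearIndependent R v) {g : ι → ι → ι → R}
    (hg : ∀ i j, ⁅v i, v j⁆ = ∑ k, g i j k • v k) (i j k : ι) : g j i k = -g i j k := by
  have hsum : ∑ k, (g i j k + g j i k) • v k = 0 := by
    rw [← neg_add_cancel ⁅v j, v i⁆, lie_skew]
    simp only [add_smul, Finset.sum_add_distrib, ← hg]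
  linear_combination Fintype.linearIndependent_iff.mp hv _ hsum k

variable (R) in
def doubleCasimir (x X : ι → L) : L ⊗[R] L := ∑ i, (x i ⊗ₜ X i + X i ⊗ₜ x i)

theorem doubleCasimir_comm (x X : ι → L) : doubleCasimir R X x = doubleCasimir R x X :=
  Finset.sum_congr rfl fun _ _ => add_comm _ _

theorem lie_doubleCasimir_eq_zero_left {x X : ι → L} {f c : ι → ι → ι → R}
    (hc : ∀ i j k, c k j i = -c k i j)
    (hxx : ∀ i j, ⁅x i, x j⁆ = ∑ k, f i j k • x k)
    (hxX : ∀ i j, ⁅x i, X j⁆ = ∑ k, c i j k • x k - ∑ k, f i k j • X k) (a : ι) :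
    ⁅x a, doubleCasimir R x X⁆ = 0 := by
  simp only [doubleCasimir, lie_sum, lie_add, LieModule.lie_tmul_right, hxx, hxX, sum_tmul,
    tmul_sum, sub_tmul, tmul_sub, tmul_smul, ← smul_tmul', Finset.sum_add_distrib,
    Finset.sum_sub_distrib]
  have hf₁ : ∑ i, ∑ k, f a i k • x k ⊗ₜ[R] X i = ∑ i, ∑ k, f a k i • x i ⊗ₜ[R] X k :=
    Finset.sum_comm
  have hf₂ : ∑ i, ∑ k, f a k i • X k ⊗ₜ[R] x i = ∑ i, ∑ k, f a i k • X i ⊗ₜ[R] x k :=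
    Finset.sum_comm
  have hc₀ := Finset.sum_sum_smul_add_swap_eq_zero (fun i k => hc i k a) fun i k => x i ⊗ₜ[R] x k
  simp only [smul_add, Finset.sum_add_distrib] at hc₀
  rw [hf₁, hf₂, ← hc₀]
  abel

theorem lie_doubleCasimir_eq_zero {f c : ι → ι → ι → R} (b : Module.Basis (ι ⊕ ι) R L)
    (hxx : ∀ i j, ⁅b (.inl i), b (.inl j)⁆ = ∑ k, f i j k • b (.inl k))
    (hXX : ∀ i j, ⁅b (.inr i), b (.inr j)⁆ = ∑ k, c k i j • b (.inr k))
    (hxX : ∀ i j, ⁅b (.inl i), b (.inr j)⁆ =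
      ∑ k, c i j k • b (.inl k) - ∑ k, f i k j • b (.inr k)) (y : L) :
    ⁅y, doubleCasimir R (b ∘ .inl) (b ∘ .inr)⁆ = 0 := by
  have hf := structConst_antisymm (b.linearIndependent.comp _ Sum.inl_injective) hxx
  have hc := structConst_antisymm (b.linearIndependent.comp _ Sum.inr_injective)
    (g := fun i j k => c k i j) hXX
  have hXx : ∀ i j, ⁅b (.inr i), b (.inl j)⁆ =
      ∑ k, f j k i • b (.inr k) - ∑ k, c j i k • b (.inl k) := fun i j => by
    rw [← lie_skew, hxX, neg_sub]
  have hbasis : ∀ s, ⁅b s, doubleCasimir R (b ∘ .inl) (b ∘ .inr)⁆ = 0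
    | .inl a => lie_doubleCasimir_eq_zero_left hc hxx hxX a
    | .inr a => by
      -- the double of `g*` is `D` again, with `(x, X, f, c)` replaced by `(X, x, c, f)`
      rw [← doubleCasimir_comm]
      exact lie_doubleCasimir_eq_zero_left (f := fun i j k => c k i j)
        (c := fun k i j => f i j k) hf hXX hXx a
  rw [← b.sum_repr y, sum_lie]
  exact Finset.sum_eq_zero fun s _ => by rw [smul_lie, hbasis, smul_zero]

variable {A : Type*} [Ring A] [Algebra R A]

theorem map_lie_eq_commutator {φ : L →ₗ[R] A} (hφ : ∀ y z, φ ⁅y, z⁆ = φ y * φ z - φ z * φ y)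
    (y : L) (t : L ⊗[R] L) :
    map φ φ ⁅y, t⁆ = (φ y ⊗ₜ[R] 1 + 1 ⊗ₜ[R] φ y) * map φ φ t -
      map φ φ t * (φ y ⊗ₜ[R] 1 + 1 ⊗ₜ[R] φ y) := by
  induction t using TensorProduct.induction_on with
  | zero => simp
  | tmul a a' =>
    simp only [LieModule.lie_tmul_right, map_add, map_tmul, hφ, add_mul, mul_add,
      Algebra.TensorProduct.tmul_mul_tmul, one_mul, mul_one, sub_tmul, tmul_sub]
    abel
  | add s t hs ht =>
    rw [lie_add, map_add, map_add, hs, ht]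
    noncomm_ring

end

theorem double_omega_ad_invariant_general (n : ℕ) (f c : Fin n → Fin n → Fin n → ℝ)
    (L : Type) [LieRing L] [LieAlgebra ℝ L]
    (b : Module.Basis (Fin n ⊕ Fin n) ℝ L)
    (hxx : ∀ i j, ⁅b (Sum.inl i), b (Sum.inl j)⁆ = ∑ k, f i j k • b (Sum.inl k))
    (hXX : ∀ i j, ⁅b (Sum.inr i), b (Sum.inr j)⁆ = ∑ k, c k i j • b (Sum.inr k))
    (hxX : ∀ i j, ⁅b (Sum.inl i), b (Sum.inr j)⁆ =
      (∑ k, c i j k • b (Sum.inl k)) - ∑ k, f i k j • b (Sum.inr k)) :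
    ∀ Y : L,
      (UniversalEnvelopingAlgebra.ι ℝ Y ⊗ₜ[ℝ] (1 : UniversalEnvelopingAlgebra ℝ L) +
            (1 : UniversalEnvelopingAlgebra ℝ L) ⊗ₜ[ℝ] UniversalEnvelopingAlgebra.ι ℝ Y) *
          (∑ i : Fin n,
            (UniversalEnvelopingAlgebra.ι ℝ (b (Sum.inl i)) ⊗ₜ[ℝ]
                UniversalEnvelopingAlgebra.ι ℝ (b (Sum.inr i)) +
              UniversalEnvelopingAlgebra.ι ℝ (b (Sum.inr i)) ⊗ₜ[ℝ]
                UniversalEnvelopingAlgebra.ι ℝ (b (Sum.inl i)))) -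
        (∑ i : Fin n,
            (UniversalEnvelopingAlgebra.ι ℝ (b (Sum.inl i)) ⊗ₜ[ℝ]
                UniversalEnvelopingAlgebra.ι ℝ (b (Sum.inr i)) +
              UniversalEnvelopingAlgebra.ι ℝ (b (Sum.inr i)) ⊗ₜ[ℝ]
                UniversalEnvelopingAlgebra.ι ℝ (b (Sum.inl i)))) *
          (UniversalEnvelopingAlgebra.ι ℝ Y ⊗ₜ[ℝ] (1 : UniversalEnvelopingAlgebra ℝ L) +
            (1 : UniversalEnvelopingAlgebra ℝ L) ⊗ₜ[ℝ] UniversalEnvelopingAlgebra.ι ℝ Y) = 0 := by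
  intro Y
  let _ : LieRing (UniversalEnvelopingAlgebra ℝ L) := LieRing.ofAssociativeRing
  have hι := map_lie_eq_commutator (φ := (UniversalEnvelopingAlgebra.ι ℝ (L := L)).toLinearMap)
    (LieHom.map_lie _) Y (doubleCasimir ℝ (b ∘ Sum.inl) (b ∘ Sum.inr))
  rw [lie_doubleCasimir_eq_zero b hxx hXX hxX, map_zero] at hι
  simpa only [doubleCasimir, Function.comp_apply, map_sum, map_add, map_tmul,
    LieHom.coe_toLinearMap] using hι.symm

/-- The symmetric two-tensor `Ω = Σ_i (x^i ⊗ X_i + X_i ⊗ x^i)`, regarded as an element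
of `U(D(g)) ⊗ U(D(g))`, is ad-invariant: for every `Y ∈ D(g)` the commutator
`[ι(Y) ⊗ 1 + 1 ⊗ ι(Y), Ω]` vanishes.

Here `D(g)` is formalized as any real Lie algebra `L` with a basis indexed by
`Fin n ⊕ Fin n` (`Sum.inl i ↦ x^i`, `Sum.inr i ↦ X_i`) whose brackets are given by the
Drinfel'd double structure constants `(f, c)` (with `f i j k = f^{ij}_k`,
`c k i j = c^k_{ij}`) satisfying the compatibility condition. -/
theorem double_omega_ad_invariant (n : ℕ) (f c : Fin n → Fin n → Fin n → ℝ)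
    (hcomp : ∀ a b i j : Fin n,
      (∑ k, f a b k * c k i j) =
        ∑ k, (f a k i * c b k j + f k b i * c a k j + f a k j * c b i k +
          f k b j * c a i k))
    (L : Type) [LieRing L] [LieAlgebra ℝ L]
    (b : Module.Basis (Fin n ⊕ Fin n) ℝ L)
    (hxx : ∀ i j, ⁅b (Sum.inl i), b (Sum.inl j)⁆ = ∑ k, f i j k • b (Sum.inl k))
    (hXX : ∀ i j, ⁅b (Sum.inr i), b (Sum.inr j)⁆ = ∑ k, c k i j • b (Sum.inr k))
    (hxX : ∀ i j, ⁅b (Sum.inl i), b (Sum.inr j)⁆ =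
      (∑ k, c i j k • b (Sum.inl k)) - ∑ k, f i k j • b (Sum.inr k)) :
    ∀ Y : L,
      (UniversalEnvelopingAlgebra.ι ℝ Y ⊗ₜ[ℝ] (1 : UniversalEnvelopingAlgebra ℝ L) +
            (1 : UniversalEnvelopingAlgebra ℝ L) ⊗ₜ[ℝ] UniversalEnvelopingAlgebra.ι ℝ Y) *
          (∑ i : Fin n,
            (UniversalEnvelopingAlgebra.ι ℝ (b (Sum.inl i)) ⊗ₜ[ℝ]
                UniversalEnvelopingAlgebra.ι ℝ (b (Sum.inr i)) +
              UniversalEnvelopingAlgebra.ι ℝ (b (Sum.inr i)) ⊗ₜ[ℝ]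
                UniversalEnvelopingAlgebra.ι ℝ (b (Sum.inl i)))) -
        (∑ i : Fin n,
            (UniversalEnvelopingAlgebra.ι ℝ (b (Sum.inl i)) ⊗ₜ[ℝ]
                UniversalEnvelopingAlgebra.ι ℝ (b (Sum.inr i)) +
              UniversalEnvelopingAlgebra.ι ℝ (b (Sum.inr i)) ⊗ₜ[ℝ]
                UniversalEnvelopingAlgebra.ι ℝ (b (Sum.inl i)))) *
          (UniversalEnvelopingAlgebra.ι ℝ Y ⊗ₜ[ℝ] (1 : UniversalEnvelopingAlgebra ℝ L) +
            (1 : UniversalEnvelopingAlgebra ℝ L) ⊗ₜ[ℝ] UniversalEnvelopingAlgebra.ι ℝ Y) = 0 :=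
  double_omega_ad_invariant_general n f c L b hxx hXX hxX
end

section
/- Let ω = ±1. The 6-dimensional real Lie algebra with basis {x^0, x^1, x^2, X_0, X_1, X_2} and nonzero brackets [x^0,x^1] = −x^2, [x^0,x^2] = x^1, [X_1,X_2] = ω X_0, [x^0,X_1] = ω x^2 − X_2, [x^0,X_2] = −ω x^1 + X_1, [x^1,X_2] = −X_0, [x^2,X_1] = X_0 (all other brackets of basis elements vanish) is a solvable Lie algebra. -/
/-- The standard basis of `ℝ⁶`; the coordinates correspond to the ordered basis
`{x^0, x^1, x^2, X_0, X_1, X_2}` of the Drinfel'd double. -/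
def e6 (i : Fin 6) : Fin 6 → ℝ := Pi.single i 1

/-- The derived series of the bracket algebra `(ℝ⁶, br)`:
`D⁰ = ℝ⁶` and `D^{k+1} = span [D^k, D^k]`. -/
def derivedSeriesOf (br : (Fin 6 → ℝ) →ₗ[ℝ] (Fin 6 → ℝ) →ₗ[ℝ] (Fin 6 → ℝ)) :
    ℕ → Submodule ℝ (Fin 6 → ℝ)
  | 0 => ⊤
  | k + 1 => Submodule.span ℝ
      {w | ∃ u ∈ derivedSeriesOf br k, ∃ v ∈ derivedSeriesOf br k, w = br u v}

lemma e6_expand (u : Fin 6 → ℝ) : u = ∑ i, u i • e6 i := by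
  funext j
  simp [e6, Finset.sum_apply, Pi.single_apply]

lemma br_span_bound (br : (Fin 6 → ℝ) →ₗ[ℝ] (Fin 6 → ℝ) →ₗ[ℝ] (Fin 6 → ℝ))
    (s : Set (Fin 6 → ℝ)) (N : Submodule ℝ (Fin 6 → ℝ))
    (h : ∀ u ∈ s, ∀ v ∈ s, br u v ∈ N) :
    ∀ u ∈ Submodule.span ℝ s, ∀ v ∈ Submodule.span ℝ s, br u v ∈ N := by
  intro u hu v hv
  refine Submodule.span_induction₂ (p := fun x y _ _ => br x y ∈ N)
    (fun x y hx hy => h x hx y hy) ?_ ?_ ?_ ?_ ?_ ?_ hu hv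
  · intro y _; simp
  · intro x _; simp
  · intro x y z _ _ _ h1 h2; simpa [map_add] using add_mem h1 h2
  · intro x y z _ _ _ h1 h2; simpa [map_add] using add_mem h1 h2
  · intro r x y _ _ h1; simpa [map_smul] using Submodule.smul_mem N r h1
  · intro r x y _ _ h1; simpa [map_smul] using Submodule.smul_mem N r h1

/-- The Drinfel'd double of type `(s_3(0), n_3)` (Table V, third column), with
`ω = ±1`, is a solvable Lie algebra: its derived series terminates at zero. -/
theorem dd_s30_n3_solvable (om : ℝ) (hom : om = 1 ∨ om = -1)
    (br : (Fin 6 → ℝ) →ₗ[ℝ] (Fin 6 → ℝ) →ₗ[ℝ] (Fin 6 → ℝ))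
    (hanti : ∀ u v, br u v = - br v u)
    (hjac : ∀ u v w, br u (br v w) + br v (br w u) + br w (br u v) = 0)
    (h01 : br (e6 0) (e6 1) = -(e6 2))               -- [x^0, x^1] = −x^2
    (h02 : br (e6 0) (e6 2) = e6 1)                  -- [x^0, x^2] = x^1
    (h03 : br (e6 0) (e6 3) = 0)                     -- [x^0, X_0] = 0
    (h04 : br (e6 0) (e6 4) = om • e6 2 - e6 5)      -- [x^0, X_1] = ω x^2 − X_2
    (h05 : br (e6 0) (e6 5) = (-om) • e6 1 + e6 4)   -- [x^0, X_2] = −ω x^1 + X_1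
    (h12 : br (e6 1) (e6 2) = 0)                     -- [x^1, x^2] = 0
    (h13 : br (e6 1) (e6 3) = 0)                     -- [x^1, X_0] = 0
    (h14 : br (e6 1) (e6 4) = 0)                     -- [x^1, X_1] = 0
    (h15 : br (e6 1) (e6 5) = -(e6 3))               -- [x^1, X_2] = −X_0
    (h23 : br (e6 2) (e6 3) = 0)                     -- [x^2, X_0] = 0
    (h24 : br (e6 2) (e6 4) = e6 3)                  -- [x^2, X_1] = X_0
    (h25 : br (e6 2) (e6 5) = 0)                     -- [x^2, X_2] = 0
    (h34 : br (e6 3) (e6 4) = 0)                     -- [X_0, X_1] = 0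
    (h35 : br (e6 3) (e6 5) = 0)                     -- [X_0, X_2] = 0
    (h45 : br (e6 4) (e6 5) = om • e6 3) :           -- [X_1, X_2] = ω X_0
    ∃ k : ℕ, derivedSeriesOf br k = ⊥ := by
  have hself : ∀ u, br u u = 0 := by
    intro u
    have h := hanti u u
    have h2 : (2 : ℝ) • br u u = 0 := by
      rw [two_smul]; nth_rewrite 2 [h]; simp
    simpa using (smul_eq_zero.mp h2).resolve_left (by norm_num)
  set V5 : Submodule ℝ (Fin 6 → ℝ) :=
    Submodule.span ℝ ({e6 1, e6 2, e6 3, e6 4, e6 5} : Set (Fin 6 → ℝ)) with hV5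
  set V1 : Submodule ℝ (Fin 6 → ℝ) :=
    Submodule.span ℝ ({e6 3} : Set (Fin 6 → ℝ)) with hV1
  have m1 : e6 1 ∈ V5 := Submodule.subset_span (by simp)
  have m2 : e6 2 ∈ V5 := Submodule.subset_span (by simp)
  have m3 : e6 3 ∈ V5 := Submodule.subset_span (by simp)
  have m4 : e6 4 ∈ V5 := Submodule.subset_span (by simp)
  have m5 : e6 5 ∈ V5 := Submodule.subset_span (by simp)
  have f01 : br (e6 0) (e6 1) ∈ V5 := by rw [h01]; exact neg_mem m2
  have f02 : br (e6 0) (e6 2) ∈ V5 := by rw [h02]; exact m1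
  have f03 : br (e6 0) (e6 3) ∈ V5 := by rw [h03]; exact zero_mem _
  have f04 : br (e6 0) (e6 4) ∈ V5 := by
    rw [h04]; exact sub_mem (Submodule.smul_mem _ om m2) m5
  have f05 : br (e6 0) (e6 5) ∈ V5 := by
    rw [h05]; exact add_mem (Submodule.smul_mem _ (-om) m1) m4
  have f12 : br (e6 1) (e6 2) ∈ V5 := by rw [h12]; exact zero_mem _
  have f13 : br (e6 1) (e6 3) ∈ V5 := by rw [h13]; exact zero_mem _
  have f14 : br (e6 1) (e6 4) ∈ V5 := by rw [h14]; exact zero_mem _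
  have f15 : br (e6 1) (e6 5) ∈ V5 := by rw [h15]; exact neg_mem m3
  have f23 : br (e6 2) (e6 3) ∈ V5 := by rw [h23]; exact zero_mem _
  have f24 : br (e6 2) (e6 4) ∈ V5 := by rw [h24]; exact m3
  have f25 : br (e6 2) (e6 5) ∈ V5 := by rw [h25]; exact zero_mem _
  have f34 : br (e6 3) (e6 4) ∈ V5 := by rw [h34]; exact zero_mem _
  have f35 : br (e6 3) (e6 5) ∈ V5 := by rw [h35]; exact zero_mem _
  have f45 : br (e6 4) (e6 5) ∈ V5 := by
    rw [h45]; exact Submodule.smul_mem _ om m3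
  have hb0 : ∀ i j : Fin 6, br (e6 i) (e6 j) ∈ V5 := by
    intro i j
    fin_cases i <;> fin_cases j <;>
      first
      | exact hself _ ▸ zero_mem _
      | exact f01 | exact f02 | exact f03 | exact f04 | exact f05
      | exact f12 | exact f13 | exact f14 | exact f15
      | exact f23 | exact f24 | exact f25
      | exact f34 | exact f35 | exact f45
      | (rw [hanti]
         exact neg_mem (by
           first
           | exact f01 | exact f02 | exact f03 | exact f04 | exact f05
           | exact f12 | exact f13 | exact f14 | exact f15
           | exact f23 | exact f24 | exact f25
           | exact f34 | exact f35 | exact f45))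
  have hbr : ∀ u v, br u v ∈ V5 := by
    intro u v
    rw [e6_expand u, e6_expand v]
    simp only [map_sum, map_smul, LinearMap.sum_apply, LinearMap.smul_apply]
    exact Submodule.sum_mem _ fun i _ => Submodule.smul_mem _ _
      (Submodule.sum_mem _ fun j _ => Submodule.smul_mem _ _ (hb0 _ _))
  have n3 : e6 3 ∈ V1 := Submodule.subset_span rfl
  have g15 : br (e6 1) (e6 5) ∈ V1 := by rw [h15]; exact neg_mem n3
  have g24 : br (e6 2) (e6 4) ∈ V1 := by rw [h24]; exact n3
  have g45 : br (e6 4) (e6 5) ∈ V1 := by rw [h45]; exact Submodule.smul_mem _ om n3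
  have hb5 : ∀ u ∈ ({e6 1, e6 2, e6 3, e6 4, e6 5} : Set (Fin 6 → ℝ)),
      ∀ v ∈ ({e6 1, e6 2, e6 3, e6 4, e6 5} : Set (Fin 6 → ℝ)), br u v ∈ V1 := by
    rintro u (rfl | rfl | rfl | rfl | rfl) v (rfl | rfl | rfl | rfl | rfl) <;>
      first
      | exact hself _ ▸ zero_mem _
      | (first
          | rw [h12] | rw [h13] | rw [h14] | rw [h23] | rw [h25] | rw [h34] | rw [h35]
          | (rw [hanti]
             first
             | rw [h12] | rw [h13] | rw [h14] | rw [h23] | rw [h25] | rw [h34] | rw [h35]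
             rw [neg_zero])
         exact zero_mem _)
      | exact g15 | exact g24 | exact g45
      | (rw [hanti]; exact neg_mem (by first | exact g15 | exact g24 | exact g45))
  have hD1 : derivedSeriesOf br 1 ≤ V5 := by
    apply Submodule.span_le.mpr
    rintro w ⟨u, -, v, -, rfl⟩
    exact hbr u v
  have hD2 : derivedSeriesOf br 2 ≤ V1 := by
    apply Submodule.span_le.mpr
    rintro w ⟨u, hu, v, hv, rfl⟩
    exact br_span_bound br _ V1 hb5 u (hD1 hu) v (hD1 hv)
  have hD3 : derivedSeriesOf br 3 = ⊥ := by
    rw [← le_bot_iff]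
    apply Submodule.span_le.mpr
    rintro w ⟨u, hu, v, hv, rfl⟩
    have : br u v ∈ (⊥ : Submodule ℝ (Fin 6 → ℝ)) := by
      refine br_span_bound br {e6 3} ⊥ ?_ u (hD2 hu) v (hD2 hv)
      rintro a rfl b rfl
      simp [hself]
    simpa using this
  exact ⟨3, hD3⟩
end
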